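/- For every integer m ≥ 1: ∫₀^∞ e^{−s} |L_{m−1}^{(1)}(s)| ds ≤ 2√m, where L_{m−1}^{(1)}(s) = Σ_{k=0}^{m−1} (−1)^k (m choose (k+1)) s^k / k! is the generalized Laguerre polynomial of degree m−1 with parameter 1. -/

import Mathlib

/-!
Write `L = L_{m-1}^{(1)} = ∑ₖ aₖ sᵏ`. Since `∫₀^∞ e^{-s} sⁿ ds = n!`, the moments
`∫₀^∞ e^{-s} sʲ L(s) ds = ∑ₖ aₖ (j + k)!` are, up to the factor `j!`, the sums
`∑ₖ (-1)ᵏ C(m, k+1) C(j+k, j)`; writing `(-1)ᵏ C(j+k, j) = C(-j-1, k)` these are the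
Chu–Vandermonde convolutions `C(m-j-1, m-1)`, i.e. `1` for `j = 0` and `0` for `0 < j < m`.
Hence `∫₀^∞ e^{-s} L² = a₀ = m`, and Cauchy–Schwarz against the probability density `e^{-s}`
gives `∫₀^∞ e^{-s} |L| ≤ √m`.
-/

open MeasureTheory Set Finset
open scoped Nat

theorem Int.alternating_sum_choose_succ_mul_choose_add {n j : ℕ} (hj : j ≤ n) :
    ∑ k ∈ Finset.range (n + 1), (-1 : ℤ) ^ k * (n + 1).choose (k + 1) * (j + k).choose j =
      if j = 0 then 1 else 0 := by
  have hneg (k : ℕ) : Ring.choose (-(j + 1 : ℤ)) k = (-1) ^ k * (j + k).choose j := by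
    rw [Ring.choose_neg, show (j + 1 + k - 1 : ℤ) = (j + k : ℕ) by push_cast; ring,
      Ring.choose_natCast, Nat.choose_symm_add, Int.negOnePow_def]
    simp [Units.smul_def]
  calc _ = ∑ k ∈ Finset.range (n + 1),
        Ring.choose (-(j + 1 : ℤ)) k * Ring.choose ((n + 1 : ℕ) : ℤ) (n - k) := by
        refine Finset.sum_congr rfl fun k hk => ?_
        rw [hneg, Ring.choose_natCast,
          Nat.choose_symm_of_eq_add (show n + 1 = (k + 1) + (n - k) by grind)]
        ring
    _ = Ring.choose (-(j + 1 : ℤ) + (n + 1 : ℕ)) n := by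
        rw [Ring.add_choose_eq _ (Commute.all _ _), Finset.Nat.sum_antidiagonal_eq_sum_range_succ
          (fun a b => Ring.choose (-(j + 1 : ℤ)) a * Ring.choose ((n + 1 : ℕ) : ℤ) b)]
    _ = (n - j).choose n := by
        rw [show -(j + 1 : ℤ) + (n + 1 : ℕ) = (n - j : ℕ) by push_cast [hj]; ring,
          Ring.choose_natCast]
    _ = if j = 0 then 1 else 0 := by
        split_ifs with h0
        · simp [h0]
        · rw [Nat.choose_eq_zero_of_lt (by omega), Nat.cast_zero]

lemma integrableOn_exp_neg_mul_pow (n : ℕ) :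
    IntegrableOn (fun s : ℝ => Real.exp (-s) * s ^ n) (Ioi 0) :=
  (Real.GammaIntegral_convergent (s := n + 1) (by positivity)).congr_fun
    (fun s _ => by simp only [add_sub_cancel_right, Real.rpow_natCast]) measurableSet_Ioi

lemma integral_exp_neg_mul_pow (n : ℕ) :
    ∫ s in Ioi (0 : ℝ), Real.exp (-s) * s ^ n = n ! := by
  rw [← Real.Gamma_nat_eq_factorial, Real.Gamma_eq_integral (by positivity)]
  exact setIntegral_congr_fun measurableSet_Ioi fun s _ => by
    simp only [add_sub_cancel_right, Real.rpow_natCast]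

section FiniteSums

variable {ι : Type*} (S : Finset ι) (c : ι → ℝ) (e : ι → ℕ)

lemma integrableOn_exp_neg_mul_sum_pow :
    IntegrableOn (fun s : ℝ => Real.exp (-s) * ∑ i ∈ S, c i * s ^ e i) (Ioi 0) := by
  simp_rw [Finset.mul_sum, mul_left_comm (Real.exp _)]
  exact integrable_finsetSum _ fun i _ => (integrableOn_exp_neg_mul_pow (e i)).const_mul (c i)

lemma integral_exp_neg_mul_sum_pow :
    ∫ s in Ioi (0 : ℝ), Real.exp (-s) * ∑ i ∈ S, c i * s ^ e i = ∑ i ∈ S, c i * (e i)! := by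
  simp_rw [Finset.mul_sum, mul_left_comm (Real.exp _)]
  rw [integral_finsetSum _ fun i _ => (integrableOn_exp_neg_mul_pow (e i)).const_mul (c i)]
  simp_rw [integral_const_mul, integral_exp_neg_mul_pow]

end FiniteSums

lemma integral_mul_abs_le_sqrt_integral_mul_sq {α : Type*} [MeasurableSpace α] {μ : Measure α}
    {w f : α → ℝ} (hw : ∀ x, 0 ≤ w x) (hw_int : Integrable w μ) (hw_one : ∫ x, w x ∂μ = 1)
    (hwf : Integrable (fun x => w x * f x ^ 2) μ) :
    ∫ x, w x * |f x| ∂μ ≤ √(∫ x, w x * f x ^ 2 ∂μ) := by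
  set I := ∫ x, w x * |f x| ∂μ
  have hI : 0 ≤ I := integral_nonneg fun x => mul_nonneg (hw x) (abs_nonneg _)
  -- integrate `2 I |f| ≤ f ^ 2 + I ^ 2` against `w`
  have key : 2 * I * I ≤ ∫ x, w x * f x ^ 2 ∂μ + I ^ 2 := calc
    2 * I * I = ∫ x, 2 * I * (w x * |f x|) ∂μ := (integral_const_mul _ _).symm
    _ ≤ ∫ x, (w x * f x ^ 2 + I ^ 2 * w x) ∂μ := by
      refine integral_mono_of_nonneg (ae_of_all _ fun x => by have := hw x; positivity)
        (hwf.add (hw_int.const_mul _)) (ae_of_all _ fun x => ?_)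
      have := mul_nonneg (hw x) (sq_nonneg (|f x| - I))
      dsimp only
      rw [← sq_abs (f x)]
      linarith
    _ = ∫ x, w x * f x ^ 2 ∂μ + I ^ 2 := by
      rw [integral_add hwf (hw_int.const_mul _), integral_const_mul, hw_one, mul_one]
  exact (le_abs_self I).trans (Real.abs_le_sqrt (by nlinarith))

lemma integral_exp_neg_mul_abs_le_sqrt (f : ℝ → ℝ)
    (hf : IntegrableOn (fun s => Real.exp (-s) * f s ^ 2) (Ioi 0)) :
    ∫ s in Ioi (0 : ℝ), Real.exp (-s) * |f s| ≤ √(∫ s in Ioi (0 : ℝ), Real.exp (-s) * f s ^ 2) := by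
  have hexp : IntegrableOn (fun s : ℝ => Real.exp (-s)) (Ioi 0) := by
    simpa using exp_neg_integrableOn_Ioi 0 one_pos
  exact integral_mul_abs_le_sqrt_integral_mul_sq (fun s => (Real.exp_pos _).le) hexp
    integral_exp_neg_Ioi_zero hf

noncomputable def laguerreCoeff (m k : ℕ) : ℝ := (-1) ^ k * m.choose (k + 1) / k !

/-- `laguerreOne m` is `L_{m-1}^{(1)}`. -/
noncomputable def laguerreOne (m : ℕ) (s : ℝ) : ℝ :=
  ∑ k ∈ Finset.range m, (-1 : ℝ) ^ k * (m.choose (k + 1) : ℝ) * s ^ k / (Nat.factorial k : ℝ)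

lemma laguerreOne_eq_sum (m : ℕ) (s : ℝ) :
    laguerreOne m s = ∑ k ∈ range m, laguerreCoeff m k * s ^ k :=
  Finset.sum_congr rfl fun k _ => by rw [laguerreCoeff]; ring

lemma laguerreOne_sq (m : ℕ) (s : ℝ) :
    laguerreOne m s ^ 2 = ∑ p ∈ range m ×ˢ range m,
      laguerreCoeff m p.1 * laguerreCoeff m p.2 * s ^ (p.1 + p.2) := by
  rw [laguerreOne_eq_sum, sq, Finset.sum_mul_sum, Finset.sum_product]
  exact Finset.sum_congr rfl fun j _ => Finset.sum_congr rfl fun k _ => by ring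

lemma sum_laguerreCoeff_mul_factorial {m j : ℕ} (hj : j < m) :
    ∑ k ∈ range m, laguerreCoeff m k * (j + k)! = if j = 0 then 1 else 0 := by
  obtain ⟨n, rfl⟩ : ∃ n, m = n + 1 := ⟨m - 1, by omega⟩
  have hterm (k : ℕ) : laguerreCoeff (n + 1) k * (j + k)! =
      (((-1 : ℤ) ^ k * (n + 1).choose (k + 1) * (j + k).choose j : ℤ) : ℝ) * j ! := by
    rw [laguerreCoeff, ← Nat.add_choose_mul_factorial_mul_factorial]
    push_cast
    field_simp
    rw [Nat.choose_symm_add]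
  simp_rw [hterm, ← Finset.sum_mul, ← Int.cast_sum,
    Int.alternating_sum_choose_succ_mul_choose_add (show j ≤ n by omega)]
  split_ifs with h0 <;> simp [h0]

lemma integrableOn_exp_neg_mul_laguerreOne_sq (m : ℕ) :
    IntegrableOn (fun s => Real.exp (-s) * laguerreOne m s ^ 2) (Ioi 0) := by
  simp_rw [laguerreOne_sq]
  exact integrableOn_exp_neg_mul_sum_pow _ _ _

lemma integral_exp_neg_mul_laguerreOne_sq (m : ℕ) :
    ∫ s in Ioi (0 : ℝ), Real.exp (-s) * laguerreOne m s ^ 2 = m := by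
  simp_rw [laguerreOne_sq, integral_exp_neg_mul_sum_pow, Finset.sum_product, mul_assoc,
    ← Finset.mul_sum]
  rw [Finset.sum_congr rfl fun j hj => by
    rw [sum_laguerreCoeff_mul_factorial (Finset.mem_range.1 hj)]]
  cases m <;> simp [laguerreCoeff]

theorem statement19_general (m : ℕ) :
    (∫ s in Ioi (0:ℝ), Real.exp (-s) *
        |∑ k ∈ Finset.range m, (-1 : ℝ) ^ k * (m.choose (k + 1) : ℝ) * s ^ k /
          (Nat.factorial k : ℝ)|) ≤ 2 * Real.sqrt m := calc
  _ ≤ √(∫ s in Ioi (0 : ℝ), Real.exp (-s) * laguerreOne m s ^ 2) :=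
    integral_exp_neg_mul_abs_le_sqrt (laguerreOne m) (integrableOn_exp_neg_mul_laguerreOne_sq m)
  _ = √m := by rw [integral_exp_neg_mul_laguerreOne_sq]
  _ ≤ 2 * √m := by linarith [Real.sqrt_nonneg m]

/-- Theorem 8.1: for every `m ≥ 1`,
`∫₀^∞ e^(-s) |L_{m-1}^{(1)}(s)| ds ≤ 2√m`, where
`L_{m-1}^{(1)}(s) = Σ_{k=0}^{m-1} (-1)^k binom(m, k+1) s^k / k!` is the generalized
Laguerre polynomial of degree `m-1` with parameter `1`. -/
theorem statement19 (m : ℕ) (hm : 1 ≤ m) :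
    (∫ s in Ioi (0:ℝ), Real.exp (-s) *
        |∑ k ∈ Finset.range m, (-1 : ℝ) ^ k * (m.choose (k + 1) : ℝ) * s ^ k /
          (Nat.factorial k : ℝ)|) ≤ 2 * Real.sqrt m :=
  statement19_general m
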